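/- arXiv:1809.05643 — 4 statements merged into one kernel-verified Lean document; each statement's English description precedes it below -/
import Mathlib

section
/- Let U be the Hilbert space of functions φ ∈ L¹_loc([0,∞)) possessing weak derivatives φ', φ'' ∈ L¹_loc([0,∞)) with ‖φ‖_U² := |φ(0)|² + |φ'(0)|² + ∫₀^∞ (|φ'(x)|² + |φ''(x)|²) w(x) dx < ∞, where w : [0,∞) → [1,∞) is nondecreasing C¹ with w^{-1/3} ∈ L¹. Then there is a constant C such that for all φ ∈ U: ‖φ‖_{L^∞([0,∞))} + ‖φ'‖_{L^∞([0,∞))} + ‖φ'‖_{L¹([0,∞))} + ‖φ''‖_{L¹([0,∞))} ≤ C ‖φ‖_U. In particular U embeds continuously into C¹_b([0,∞)). -/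
open MeasureTheory Set

/-- `g` is a (locally integrable) weak derivative of `f` on `[0,∞)`. -/
def IsWeakDerivOn (f g : ℝ → ℝ) : Prop :=
  LocallyIntegrableOn g (Set.Ici 0) ∧
  ∀ x y : ℝ, 0 ≤ y → y ≤ x → f x - f y = ∫ z in y..x, g z

/-- Membership in the weighted Hilbert space `U`:
`φ` has weak derivatives `d1`, `d2` on `[0,∞)` and the weighted integral in the
`U`-norm is finite. -/
def MemU (w φ d1 d2 : ℝ → ℝ) : Prop :=
  IsWeakDerivOn φ d1 ∧ IsWeakDerivOn d1 d2 ∧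
  IntegrableOn (fun x => ((d1 x) ^ 2 + (d2 x) ^ 2) * w x) (Set.Ici 0)

/-- The `U`-norm `‖φ‖_U = (|φ(0)|² + |φ'(0)|² + ∫₀^∞ (|φ'|² + |φ''|²) w)^{1/2}`. -/
noncomputable def UNorm (w φ d1 d2 : ℝ → ℝ) : ℝ :=
  Real.sqrt ((φ 0) ^ 2 + (d1 0) ^ 2 +
    ∫ x in Set.Ici (0:ℝ), ((d1 x) ^ 2 + (d2 x) ^ 2) * w x)

/-!
Since `|φ'|, |φ''| ≤ √(φ'² + φ''²) = √((φ'² + φ''²) w) · w^{-1/2}`, Cauchy–Schwarz bounds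
`‖φ'‖_{L¹}` and `‖φ''‖_{L¹}` by `‖φ‖_U (∫₀^∞ w⁻¹)^{1/2}`, and `w⁻¹ ≤ w^{-1/3}` is integrable
because `w ≥ 1`. The sup bounds then follow from `φ(x) = φ(0) + ∫₀ˣ φ'` and
`φ'(x) = φ'(0) + ∫₀ˣ φ''`.
-/

section

variable {α : Type*} [MeasurableSpace α] {μ : Measure α}

lemma memLp_two_sqrt {f : α → ℝ} (hf0 : 0 ≤ᵐ[μ] f) (hf : Integrable f μ) :
    MemLp (fun x => √(f x)) 2 μ := by
  refine (memLp_two_iff_integrable_sq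
    hf.aestronglyMeasurable.aemeasurable.sqrt.aestronglyMeasurable).2 (hf.congr ?_)
  filter_upwards [hf0] with x hx using (Real.sq_sqrt hx).symm

lemma integral_sqrt_mul_sqrt_le {f h : α → ℝ} (hf0 : 0 ≤ᵐ[μ] f) (hh0 : 0 ≤ᵐ[μ] h)
    (hf : Integrable f μ) (hh : Integrable h μ) :
    ∫ x, √(f x) * √(h x) ∂μ ≤ √(∫ x, f x ∂μ) * √(∫ x, h x ∂μ) := by
  have integral_sqrt_rpow_two {g : α → ℝ} (hg0 : 0 ≤ᵐ[μ] g) :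
      ∫ x, √(g x) ^ (2 : ℝ) ∂μ = ∫ x, g x ∂μ := by
    refine integral_congr_ae ?_
    filter_upwards [hg0] with x hx
    rw [Real.rpow_two, Real.sq_sqrt hx]
  have holder := integral_mul_le_Lp_mul_Lq_of_nonneg Real.HolderConjugate.two_two
    (ae_of_all _ fun _ => Real.sqrt_nonneg _) (ae_of_all _ fun _ => Real.sqrt_nonneg _)
    (by simpa using memLp_two_sqrt hf0 hf) (by simpa using memLp_two_sqrt hh0 hh)
  rwa [integral_sqrt_rpow_two hf0, integral_sqrt_rpow_two hh0, ← Real.sqrt_eq_rpow,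
    ← Real.sqrt_eq_rpow] at holder

lemma integral_sqrt_le_of_integrable_mul_weight {q w : α → ℝ} (hq0 : 0 ≤ᵐ[μ] q)
    (hw : ∀ᵐ x ∂μ, 0 < w x) (hqw : Integrable (fun x => q x * w x) μ)
    (hwinv : Integrable (fun x => (w x)⁻¹) μ) :
    Integrable (fun x => √(q x)) μ ∧
      ∫ x, √(q x) ∂μ ≤ √(∫ x, q x * w x ∂μ) * √(∫ x, (w x)⁻¹ ∂μ) := by
  have hqw0 : 0 ≤ᵐ[μ] fun x => q x * w x := by
    filter_upwards [hq0, hw] with x hqx hwx using mul_nonneg hqx hwx.le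
  have hwinv0 : 0 ≤ᵐ[μ] fun x => (w x)⁻¹ := by
    filter_upwards [hw] with x hwx using inv_nonneg.2 hwx.le
  have hsplit : (fun x => √(q x * w x) * √((w x)⁻¹)) =ᵐ[μ] fun x => √(q x) := by
    filter_upwards [hq0, hw] with x hqx hwx
    rw [← Real.sqrt_mul (mul_nonneg hqx hwx.le), mul_assoc, mul_inv_cancel₀ hwx.ne', mul_one]
  refine ⟨?_, ?_⟩
  · exact ((memLp_two_sqrt hqw0 hqw).integrable_mul (memLp_two_sqrt hwinv0 hwinv)).congr hsplit
  · rw [← integral_congr_ae hsplit]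
    exact integral_sqrt_mul_sqrt_le hqw0 hwinv0 hqw hwinv

lemma integrable_inv_of_integrable_rpow_neg {w : α → ℝ} {p : ℝ} (hp0 : 0 < p) (hp1 : p ≤ 1)
    (hw : ∀ᵐ x ∂μ, 1 ≤ w x) (h : Integrable (fun x => w x ^ (-p)) μ) :
    Integrable (fun x => (w x)⁻¹) μ := by
  have hpow : (fun x => (w x ^ (-p)) ^ p⁻¹) =ᵐ[μ] fun x => (w x)⁻¹ := by
    filter_upwards [hw] with x hx
    rw [← Real.rpow_mul (by linarith), neg_mul, mul_inv_cancel₀ hp0.ne', Real.rpow_neg_one]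
  refine h.mono' ((h.aemeasurable.pow_const _).aestronglyMeasurable.congr hpow) ?_
  filter_upwards [hw] with x hx
  rw [Real.norm_of_nonneg (inv_nonneg.2 (by linarith)), ← Real.rpow_neg_one]
  exact Real.rpow_le_rpow_of_exponent_le hx (by linarith)

end

lemma IsWeakDerivOn.abs_le_abs_zero_add_integral_abs {f g : ℝ → ℝ} (hfg : IsWeakDerivOn f g)
    (hg : IntegrableOn g (Ici 0)) {x : ℝ} (hx : 0 ≤ x) :
    |f x| ≤ |f 0| + ∫ y in Ici 0, |g y| := by
  have hintegral : |∫ z in (0 : ℝ)..x, g z| ≤ ∫ y in Ici 0, |g y| :=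
    calc |∫ z in (0 : ℝ)..x, g z| ≤ ∫ z in (0 : ℝ)..x, |g z| :=
          intervalIntegral.abs_integral_le_integral_abs hx
      _ = ∫ z in Ioc 0 x, |g z| := intervalIntegral.integral_of_le hx
      _ ≤ ∫ y in Ici 0, |g y| :=
          setIntegral_mono_set hg.abs (ae_of_all _ fun _ => abs_nonneg _)
            (Ioc_subset_Icc_self.trans Icc_subset_Ici_self).eventuallyLE
  calc |f x| = |f 0 + ∫ z in (0 : ℝ)..x, g z| := by rw [← hfg.2 x 0 le_rfl hx, add_sub_cancel]
    _ ≤ |f 0| + |∫ z in (0 : ℝ)..x, g z| := abs_add_le _ _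
    _ ≤ |f 0| + ∫ y in Ici 0, |g y| := by gcongr

lemma integral_weighted_nonneg {w : ℝ → ℝ} (d1 d2 : ℝ → ℝ) (hw : ∀ x ∈ Ici (0 : ℝ), 0 < w x) :
    0 ≤ ∫ x in Ici (0 : ℝ), ((d1 x) ^ 2 + (d2 x) ^ 2) * w x :=
  setIntegral_nonneg measurableSet_Ici fun x hx => by have := hw x hx; positivity

section UNorm

variable {w φ d1 d2 : ℝ → ℝ}

lemma abs_apply_zero_le_UNorm (hw : ∀ x ∈ Ici (0 : ℝ), 0 < w x) :
    |φ 0| ≤ UNorm w φ d1 d2 := by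
  rw [← Real.sqrt_sq_eq_abs]
  exact Real.sqrt_le_sqrt <| le_add_of_le_of_nonneg (le_add_of_nonneg_right (sq_nonneg _))
    (integral_weighted_nonneg d1 d2 hw)

lemma abs_deriv_zero_le_UNorm (hw : ∀ x ∈ Ici (0 : ℝ), 0 < w x) :
    |d1 0| ≤ UNorm w φ d1 d2 := by
  rw [← Real.sqrt_sq_eq_abs]
  exact Real.sqrt_le_sqrt <| le_add_of_le_of_nonneg (le_add_of_nonneg_left (sq_nonneg _))
    (integral_weighted_nonneg d1 d2 hw)

lemma sqrt_integral_weighted_le_UNorm :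
    √(∫ x in Ici (0 : ℝ), ((d1 x) ^ 2 + (d2 x) ^ 2) * w x) ≤ UNorm w φ d1 d2 :=
  Real.sqrt_le_sqrt (le_add_of_nonneg_left (by positivity))

lemma integrableOn_and_integral_abs_le_UNorm {g : ℝ → ℝ}
    (hI : IntegrableOn (fun x => ((d1 x) ^ 2 + (d2 x) ^ 2) * w x) (Ici 0))
    (hw : ∀ x ∈ Ici (0 : ℝ), 0 < w x) (hwinv : IntegrableOn (fun x => (w x)⁻¹) (Ici 0))
    (hg : AEStronglyMeasurable g (volume.restrict (Ici 0)))
    (hg_le : ∀ x, |g x| ≤ √((d1 x) ^ 2 + (d2 x) ^ 2)) :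
    IntegrableOn g (Ici 0) ∧
      ∫ y in Ici (0 : ℝ), |g y| ≤ UNorm w φ d1 d2 * √(∫ x in Ici (0 : ℝ), (w x)⁻¹) := by
  obtain ⟨hsqrt, hsqrt_le⟩ := integral_sqrt_le_of_integrable_mul_weight
    (ae_of_all _ fun x => by positivity) (ae_restrict_of_forall_mem measurableSet_Ici hw)
    hI hwinv
  have hint : IntegrableOn g (Ici 0) := hsqrt.mono' hg (ae_of_all _ hg_le)
  refine ⟨hint, ?_⟩
  calc ∫ y in Ici (0 : ℝ), |g y|
      ≤ ∫ x in Ici (0 : ℝ), √((d1 x) ^ 2 + (d2 x) ^ 2) :=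
        integral_mono hint.abs hsqrt hg_le
    _ ≤ _ := hsqrt_le.trans (by gcongr; exact sqrt_integral_weighted_le_UNorm)

end UNorm

theorem stmt_6_general
    (w : ℝ → ℝ)
    (hw1 : ∀ x ∈ Set.Ici (0:ℝ), 1 ≤ w x)
    (hw13 : IntegrableOn (fun x => (w x) ^ (-(1/3 : ℝ))) (Set.Ici 0)) :
    ∃ C > 0, ∀ φ d1 d2 : ℝ → ℝ, MemU w φ d1 d2 →
      IntegrableOn d1 (Set.Ici 0) ∧ IntegrableOn d2 (Set.Ici 0) ∧
      ∀ x : ℝ, 0 ≤ x →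
        |φ x| + |d1 x| + (∫ y in Set.Ici (0:ℝ), |d1 y|) +
            (∫ y in Set.Ici (0:ℝ), |d2 y|) ≤
          C * UNorm w φ d1 d2 := by
  have hw : ∀ x ∈ Ici (0 : ℝ), 0 < w x := fun x hx => zero_lt_one.trans_le (hw1 x hx)
  have hwinv : IntegrableOn (fun x => (w x)⁻¹) (Ici 0) :=
    integrable_inv_of_integrable_rpow_neg (by norm_num) (by norm_num)
      (ae_restrict_of_forall_mem measurableSet_Ici hw1) hw13
  refine ⟨2 + 4 * √(∫ x in Ici (0 : ℝ), (w x)⁻¹), by positivity, ?_⟩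
  rintro φ d1 d2 ⟨hφ, hd1, hI⟩
  obtain ⟨hint1, hL1⟩ := integrableOn_and_integral_abs_le_UNorm (φ := φ) hI hw hwinv
    hφ.1.aestronglyMeasurable fun _ => Real.abs_le_sqrt (le_add_of_nonneg_right (sq_nonneg _))
  obtain ⟨hint2, hL2⟩ := integrableOn_and_integral_abs_le_UNorm (φ := φ) hI hw hwinv
    hd1.1.aestronglyMeasurable fun _ => Real.abs_le_sqrt (le_add_of_nonneg_left (sq_nonneg _))
  refine ⟨hint1, hint2, fun x hx => ?_⟩
  have hφx := hφ.abs_le_abs_zero_add_integral_abs hint1 hx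
  have hd1x := hd1.abs_le_abs_zero_add_integral_abs hint2 hx
  have hφ0 : |φ 0| ≤ UNorm w φ d1 d2 := abs_apply_zero_le_UNorm hw
  have hd10 : |d1 0| ≤ UNorm w φ d1 d2 := abs_deriv_zero_le_UNorm hw
  -- hides the `⁻¹` under the integral from `linarith`'s preprocessing
  set B := ∫ x in Ici (0 : ℝ), (w x)⁻¹
  linarith

/-- the continuous embedding `U ↪ C¹_b([0,∞))` together with the
`L¹` bounds on the first and second derivatives. -/
theorem stmt_6
    (w : ℝ → ℝ)
    (hw1 : ∀ x ∈ Set.Ici (0:ℝ), 1 ≤ w x)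
    (hwmono : MonotoneOn w (Set.Ici 0))
    (hwC1 : ContDiffOn ℝ 1 w (Set.Ici 0))
    (hw13 : IntegrableOn (fun x => (w x) ^ (-(1/3 : ℝ))) (Set.Ici 0)) :
    ∃ C > 0, ∀ φ d1 d2 : ℝ → ℝ, MemU w φ d1 d2 →
      IntegrableOn d1 (Set.Ici 0) ∧ IntegrableOn d2 (Set.Ici 0) ∧
      ∀ x : ℝ, 0 ≤ x →
        |φ x| + |d1 x| + (∫ y in Set.Ici (0:ℝ), |d1 y|) +
            (∫ y in Set.Ici (0:ℝ), |d2 y|) ≤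
          C * UNorm w φ d1 d2 :=
  stmt_6_general w hw1 hw13
end

section
/- Let U be the weighted Hilbert space with norm ‖φ‖_U² = |φ(0)|² + |φ'(0)|² + ∫₀^∞ (|φ'|² + |φ''|²) w dx, where w : [0,∞) → [1,∞) is nondecreasing C¹ with w^{-1/3} ∈ L¹. Then the left-shift semigroup (S(t)φ)(x) = φ(t+x) satisfies ‖S(t)φ‖_U ≤ C ‖φ‖_U for a constant C independent of t ≥ 0 and φ ∈ U; i.e., S(t) is a uniformly bounded family of operators on U. -/
open MeasureTheory Set Filter Topology

/-! Cauchy–Schwarz with the weight `w` controls the point values: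
`|φ(t) - φ(0)|² = |∫₀ᵗ φ'|² ≤ (∫₀^∞ φ'² w) (∫₀^∞ w⁻¹)`, and likewise for `φ'`, where `w⁻¹ ≤ w^{-1/3}`
is integrable because `w ≥ 1`. The weighted integral of `S(t)φ` is at most that of `φ` because
`w x ≤ w (t + x)`. -/

theorem sq_integral_le_integral_sq_mul_weight_mul_integral_inv {α : Type*} [MeasurableSpace α]
    {μ : Measure α} {g w : α → ℝ} (hw : ∀ᵐ x ∂μ, 0 < w x) (hg : Integrable g μ)
    (hgw : Integrable (fun x => g x ^ 2 * w x) μ) (hwinv : Integrable (fun x => (w x)⁻¹) μ) :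
    (∫ x, g x ∂μ) ^ 2 ≤ (∫ x, g x ^ 2 * w x ∂μ) * ∫ x, (w x)⁻¹ ∂μ := by
  -- the quadratic `c ↦ ∫ (c g w - 1)² / w` is nonnegative, so its discriminant is nonpositive
  have hquad : ∀ c : ℝ, 0 ≤ (∫ x, g x ^ 2 * w x ∂μ) * (c * c) + (-2 * ∫ x, g x ∂μ) * c +
      ∫ x, (w x)⁻¹ ∂μ := by
    intro c
    have hexpand : ∫ x, (c * g x * w x - 1) ^ 2 / w x ∂μ =
        ∫ x, (c * c * (g x ^ 2 * w x) - 2 * c * g x + (w x)⁻¹) ∂μ :=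
      integral_congr_ae <| by filter_upwards [hw] with x hx; field_simp; ring
    have hpoly : Integrable (fun x => c * c * (g x ^ 2 * w x) - 2 * c * g x) μ :=
      (hgw.const_mul _).sub (hg.const_mul _)
    rw [integral_add hpoly hwinv,
      integral_sub (hgw.const_mul _) (hg.const_mul _), integral_const_mul,
      integral_const_mul] at hexpand
    have hnonneg : 0 ≤ ∫ x, (c * g x * w x - 1) ^ 2 / w x ∂μ :=
      integral_nonneg_of_ae (by filter_upwards [hw] with x hx; positivity)
    linarith
  have hdisc := discrim_le_zero hquad
  rw [discrim] at hdisc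
  nlinarith

theorem IsWeakDerivOn.sq_sub_le {f g w : ℝ → ℝ} (hfg : IsWeakDerivOn f g)
    (hw : ∀ x ∈ Ici (0 : ℝ), 0 < w x) (hgw : IntegrableOn (fun x => g x ^ 2 * w x) (Ici 0))
    (hwinv : IntegrableOn (fun x => (w x)⁻¹) (Ici 0)) {t : ℝ} (ht : 0 ≤ t) :
    (f t - f 0) ^ 2 ≤ (∫ x in Ici 0, g x ^ 2 * w x) * ∫ x in Ici 0, (w x)⁻¹ := by
  have hsub : Ioc 0 t ⊆ Ici (0 : ℝ) := Ioc_subset_Icc_self.trans Icc_subset_Ici_self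
  have hg : IntegrableOn g (Ioc 0 t) :=
    (hfg.1.integrableOn_compact_subset Icc_subset_Ici_self isCompact_Icc).mono_set
      Ioc_subset_Icc_self
  have hgw_nonneg : ∀ x ∈ Ici (0 : ℝ), 0 ≤ g x ^ 2 * w x := fun x hx => by
    have := hw x hx; positivity
  have hwinv_nonneg : ∀ x ∈ Ici (0 : ℝ), 0 ≤ (w x)⁻¹ := fun x hx => by
    have := hw x hx; positivity
  rw [hfg.2 t 0 le_rfl ht, intervalIntegral.integral_of_le ht]
  calc (∫ x in Ioc 0 t, g x) ^ 2
      ≤ (∫ x in Ioc 0 t, g x ^ 2 * w x) * ∫ x in Ioc 0 t, (w x)⁻¹ :=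
        sq_integral_le_integral_sq_mul_weight_mul_integral_inv
          (ae_restrict_of_forall_mem measurableSet_Ioc fun x hx => hw x (hsub hx)) hg
          (hgw.mono_set hsub) (hwinv.mono_set hsub)
    _ ≤ (∫ x in Ici 0, g x ^ 2 * w x) * ∫ x in Ici 0, (w x)⁻¹ :=
      mul_le_mul
        (setIntegral_mono_set hgw (ae_restrict_of_forall_mem measurableSet_Ici hgw_nonneg)
          hsub.eventuallyLE)
        (setIntegral_mono_set hwinv (ae_restrict_of_forall_mem measurableSet_Ici hwinv_nonneg)
          hsub.eventuallyLE)
        (setIntegral_nonneg measurableSet_Ioc fun x hx => hwinv_nonneg x (hsub hx))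
        (setIntegral_nonneg measurableSet_Ici hgw_nonneg)

theorem setIntegral_Ici_comp_add_mul_le {h w : ℝ → ℝ} (hh : ∀ x ∈ Ici (0 : ℝ), 0 ≤ h x)
    (hw : ∀ x ∈ Ici (0 : ℝ), 0 ≤ w x) (hwmono : MonotoneOn w (Ici 0))
    (hhw : IntegrableOn (fun x => h x * w x) (Ici 0)) {t : ℝ} (ht : 0 ≤ t) :
    ∫ x in Ici 0, h (t + x) * w x ≤ ∫ x in Ici 0, h x * w x := by
  have hmp := measurePreserving_add_left volume t
  have hpre : (t + ·) ⁻¹' Ici t = Ici 0 := by ext; simp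
  have hsub : Ici t ⊆ Ici (0 : ℝ) := Ici_subset_Ici.mpr ht
  have htx : ∀ x ∈ Ici (0 : ℝ), t + x ∈ Ici 0 := fun x (hx : 0 ≤ x) =>
    show 0 ≤ t + x by linarith
  have hhw_nonneg : ∀ x ∈ Ici (0 : ℝ), 0 ≤ h x * w x := fun x hx => mul_nonneg (hh x hx) (hw x hx)
  have hshift : IntegrableOn (fun x => h (t + x) * w (t + x)) (Ici 0) := by
    rw [← hpre]
    exact (hmp.integrableOn_comp_preimage (measurableEmbedding_addLeft t)).mpr
      (hhw.mono_set hsub)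
  calc ∫ x in Ici 0, h (t + x) * w x
      ≤ ∫ x in Ici 0, h (t + x) * w (t + x) :=
        integral_mono_of_nonneg
          (ae_restrict_of_forall_mem measurableSet_Ici fun x hx =>
            mul_nonneg (hh _ (htx x hx)) (hw x hx))
          hshift
          (ae_restrict_of_forall_mem measurableSet_Ici fun x hx =>
            mul_le_mul_of_nonneg_left (hwmono hx (htx x hx) (le_add_of_nonneg_left ht))
              (hh _ (htx x hx)))
    _ = ∫ x in Ici t, h x * w x := by
        rw [← hpre]
        exact hmp.setIntegral_preimage_emb (measurableEmbedding_addLeft t) (fun x => h x * w x) _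
    _ ≤ ∫ x in Ici 0, h x * w x :=
        setIntegral_mono_set hhw (ae_restrict_of_forall_mem measurableSet_Ici hhw_nonneg)
          hsub.eventuallyLE

theorem IntegrableOn.inv_of_one_le {α : Type*} [MeasurableSpace α] {μ : Measure α} {s : Set α}
    {w : α → ℝ} {p : ℝ} (hwp : IntegrableOn (fun x => w x ^ (-p)) s μ) (hs : MeasurableSet s)
    (hp : p ≤ 1) (hw1 : ∀ x ∈ s, 1 ≤ w x) (hwm : AEStronglyMeasurable w (μ.restrict s)) :
    IntegrableOn (fun x => (w x)⁻¹) s μ := by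
  refine hwp.mono' hwm.aemeasurable.inv.aestronglyMeasurable
    (ae_restrict_of_forall_mem hs fun x hx => ?_)
  rw [Real.norm_of_nonneg (inv_nonneg.mpr (zero_le_one.trans (hw1 x hx))), ← Real.rpow_neg_one]
  exact Real.rpow_le_rpow_of_exponent_le (hw1 x hx) (by linarith)

theorem MemU.sq_sub_add_sq_sub_le {w φ d1 d2 : ℝ → ℝ} (hmem : MemU w φ d1 d2)
    (hw : ∀ x ∈ Ici (0 : ℝ), 0 < w x) (hwm : AEStronglyMeasurable w (volume.restrict (Ici 0)))
    (hwinv : IntegrableOn (fun x => (w x)⁻¹) (Ici 0)) {t : ℝ} (ht : 0 ≤ t) :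
    (φ t - φ 0) ^ 2 + (d1 t - d1 0) ^ 2 ≤
      (∫ x in Ici 0, (d1 x ^ 2 + d2 x ^ 2) * w x) * ∫ x in Ici 0, (w x)⁻¹ := by
  obtain ⟨hφ, hd1, hI⟩ := hmem
  have hsq_mul : ∀ g : ℝ → ℝ, AEStronglyMeasurable g (volume.restrict (Ici 0)) →
      (∀ x, g x ^ 2 ≤ d1 x ^ 2 + d2 x ^ 2) → IntegrableOn (fun x => g x ^ 2 * w x) (Ici 0) :=
    fun g hg hle => hI.mono' ((hg.pow 2).mul hwm) <|
      ae_restrict_of_forall_mem measurableSet_Ici fun x hx => by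
        rw [Real.norm_of_nonneg (mul_nonneg (sq_nonneg _) (hw x hx).le)]
        exact mul_le_mul_of_nonneg_right (hle x) (hw x hx).le
  have hd1w := hsq_mul d1 hφ.1.aestronglyMeasurable fun x => by nlinarith [sq_nonneg (d2 x)]
  have hd2w := hsq_mul d2 hd1.1.aestronglyMeasurable fun x => by nlinarith [sq_nonneg (d1 x)]
  have hI_eq : ∫ x in Ici 0, (d1 x ^ 2 + d2 x ^ 2) * w x =
      (∫ x in Ici 0, d1 x ^ 2 * w x) + ∫ x in Ici 0, d2 x ^ 2 * w x := by
    simp only [add_mul]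
    exact integral_add hd1w hd2w
  rw [hI_eq, add_mul]
  exact add_le_add (hφ.sq_sub_le hw hd1w hwinv ht) (hd1.sq_sub_le hw hd2w hwinv ht)

theorem stmt_7_general
    (w : ℝ → ℝ)
    (hw1 : ∀ x ∈ Set.Ici (0:ℝ), 1 ≤ w x)
    (hwmono : MonotoneOn w (Set.Ici 0))
    (hw13 : IntegrableOn (fun x => (w x) ^ (-(1/3 : ℝ))) (Set.Ici 0)) :
    ∃ C > 0, ∀ t : ℝ, 0 ≤ t → ∀ φ d1 d2 : ℝ → ℝ, MemU w φ d1 d2 →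
      UNorm w (fun x => φ (t + x)) (fun x => d1 (t + x)) (fun x => d2 (t + x)) ≤
        C * UNorm w φ d1 d2 := by
  have hwpos : ∀ x ∈ Ici (0 : ℝ), 0 < w x := fun x hx => one_pos.trans_le (hw1 x hx)
  have hwm : AEStronglyMeasurable w (volume.restrict (Ici 0)) :=
    (aemeasurable_restrict_of_monotoneOn measurableSet_Ici hwmono).aestronglyMeasurable
  have hwinv : IntegrableOn (fun x => (w x)⁻¹) (Ici 0) :=
    IntegrableOn.inv_of_one_le hw13 measurableSet_Ici (by norm_num) hw1 hwm
  have hM : 0 ≤ ∫ x in Ici 0, (w x)⁻¹ :=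
    setIntegral_nonneg measurableSet_Ici fun x hx => (inv_pos.2 (hwpos x hx)).le
  refine ⟨√(2 * (∫ x in Ici 0, (w x)⁻¹) + 2), by positivity, fun t ht φ d1 d2 hmem => ?_⟩
  have hpoint := hmem.sq_sub_add_sq_sub_le hwpos hwm hwinv ht
  have hshift := setIntegral_Ici_comp_add_mul_le (h := fun x => d1 x ^ 2 + d2 x ^ 2)
    (fun x _ => by positivity) (fun x hx => (hwpos x hx).le) hwmono hmem.2.2 ht
  have hI : 0 ≤ ∫ x in Ici 0, (d1 x ^ 2 + d2 x ^ 2) * w x :=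
    setIntegral_nonneg measurableSet_Ici fun x hx => mul_nonneg (by positivity) (hwpos x hx).le
  rw [UNorm, UNorm, ← Real.sqrt_mul (by positivity)]
  refine Real.sqrt_le_sqrt ?_
  simp only [add_zero]
  -- `a² ≤ 2 b² + 2 (a - b)²` for the point values, and `hshift` for the integral
  nlinarith [sq_nonneg (2 * φ 0 - φ t), sq_nonneg (2 * d1 0 - d1 t)]

/-- the shift semigroup `S(t)φ = φ(t + ·)` is uniformly bounded
on `U`. -/
theorem stmt_7
    (w : ℝ → ℝ)
    (hw1 : ∀ x ∈ Set.Ici (0:ℝ), 1 ≤ w x)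
    (hwmono : MonotoneOn w (Set.Ici 0))
    (hwC1 : ContDiffOn ℝ 1 w (Set.Ici 0))
    (hw13 : IntegrableOn (fun x => (w x) ^ (-(1/3 : ℝ))) (Set.Ici 0)) :
    ∃ C > 0, ∀ t : ℝ, 0 ≤ t → ∀ φ d1 d2 : ℝ → ℝ, MemU w φ d1 d2 →
      UNorm w (fun x => φ (t + x)) (fun x => d1 (t + x)) (fun x => d2 (t + x)) ≤
        C * UNorm w φ d1 d2 :=
  stmt_7_general w hw1 hwmono hw13
end

section
/- Let U be the weighted Hilbert space as above, and S(t)φ(x) = φ(t+x) the shift semigroup on U. Then S is strongly continuous: for each φ ∈ U, ‖S(t)φ − φ‖_U → 0 as t → 0⁺. -/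
open MeasureTheory Set Filter Topology

open scoped ENNReal

/-! Since `w` is nondecreasing, the left shift `f ↦ f (t + ·)`, `t ≥ 0`, pushes the measure
`w x dx` on `[0, ∞)` forward to a smaller measure, so the shifts are contractions of every
`Lᵖ(w)`. On continuous compactly supported functions they converge to the identity by dominated
convergence, and these functions are dense in `Lᵖ(w)`, `p < ∞`; an `ε/3` argument gives strong
continuity on all of `Lᵖ(w)`. Applied to `φ'` and `φ''` this controls the integral part of
`‖S(t)φ − φ‖_U`, while `φ(t) − φ(0)` and `φ'(t) − φ'(0)` tend to `0` because `φ` and `φ'` are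
primitives of locally integrable functions. -/

section Translation

variable {E : Type*} [NormedAddCommGroup E]

theorem eLpNorm_two_sq_eq_lintegral {α : Type*} [MeasurableSpace α] {μ : Measure α}
    (f : α → E) : eLpNorm f 2 μ ^ 2 = ∫⁻ x, ‖f x‖ₑ ^ 2 ∂μ := by
  simpa using eLpNorm_nnreal_pow_eq_lintegral (f := f) (μ := μ) (p := 2) two_ne_zero

theorem tendsto_eLpNorm_comp_add_left_sub_of_hasCompactSupport {μ : Measure ℝ}
    [IsLocallyFiniteMeasure μ] {p : ℝ≥0∞} (hp : p ≠ ∞) {u : ℝ → E} (hu : Continuous u)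
    (hs : HasCompactSupport u) :
    Tendsto (fun t => eLpNorm (fun x => u (t + x) - u x) p μ) (𝓝 0) (𝓝 0) := by
  rcases eq_or_ne p 0 with rfl | hp0
  · simp
  have hr : 0 < p.toReal := ENNReal.toReal_pos hp0 hp
  obtain ⟨C, hC⟩ := hs.exists_bound_of_continuous hu
  obtain ⟨R, hR⟩ := hs.isBounded.subset_closedBall 0
  have hK : μ (Metric.closedBall 0 (R + 1)) ≠ ∞ := (isCompact_closedBall 0 _).measure_lt_top.ne
  simp only [eLpNorm_eq_lintegral_rpow_enorm_toReal hp0 hp]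
  rw [← ENNReal.zero_rpow_of_pos (one_div_pos.2 hr)]
  refine (ENNReal.continuous_rpow_const.tendsto _).comp ?_
  rw [← lintegral_zero]
  refine tendsto_lintegral_filter_of_dominated_convergence
    ((Metric.closedBall 0 (R + 1)).indicator fun _ => ENNReal.ofReal (2 * C) ^ p.toReal) ?_ ?_ ?_ ?_
  · refine Eventually.of_forall fun t => Continuous.measurable ?_
    fun_prop
  · filter_upwards [Metric.ball_mem_nhds (0 : ℝ) one_pos] with t ht
    refine Eventually.of_forall fun x => ?_
    by_cases hx : x ∈ Metric.closedBall 0 (R + 1)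
    · rw [indicator_of_mem hx, ← ofReal_norm]
      gcongr
      exact (norm_sub_le _ _).trans (by linarith [hC (t + x), hC x])
    · have hout : ∀ y, y ∉ Metric.closedBall (0 : ℝ) R → u y = 0 := fun y hy =>
        image_eq_zero_of_notMem_tsupport fun h => hy (hR h)
      rw [hout x fun h => hx (Metric.closedBall_subset_closedBall (by linarith) h), hout (t + x)]
      · simp [hr]
      · intro h
        simp only [Metric.mem_ball, Metric.mem_closedBall, Real.dist_eq, sub_zero] at ht h hx
        have := abs_sub (t + x) t
        rw [add_sub_cancel_left] at this
        exact hx (by linarith)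
  · rw [lintegral_indicator_const measurableSet_closedBall]
    exact ENNReal.mul_ne_top (ENNReal.rpow_ne_top_of_nonneg hr.le ENNReal.ofReal_ne_top) hK
  · refine Eventually.of_forall fun x => ?_
    have : Continuous fun t : ℝ => ‖u (t + x) - u x‖ₑ ^ p.toReal := by fun_prop
    simpa [hr] using this.tendsto 0

theorem eLpNorm_comp_add_left_le {μ : Measure ℝ} {t : ℝ} (h : μ.map (t + ·) ≤ μ) (f : ℝ → E)
    (p : ℝ≥0∞) : eLpNorm (fun x => f (t + x)) p μ ≤ eLpNorm f p μ := by
  rw [← Function.comp_def, ← (measurableEmbedding_addLeft t).eLpNorm_map_measure]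
  exact eLpNorm_mono_measure f h

theorem MeasureTheory.MemLp.comp_add_left {μ : Measure ℝ} {t : ℝ} (h : μ.map (t + ·) ≤ μ)
    {f : ℝ → E} {p : ℝ≥0∞} (hf : MemLp f p μ) : MemLp (fun x => f (t + x)) p μ :=
  ⟨hf.1.comp_quasiMeasurePreserving
      ⟨measurable_const_add t, Measure.absolutelyContinuous_of_le h⟩,
    (eLpNorm_comp_add_left_le h f p).trans_lt hf.2⟩

theorem tendsto_eLpNorm_comp_add_left_sub [NormedSpace ℝ E] {μ : Measure ℝ}
    [IsLocallyFiniteMeasure μ] (hμ : ∀ t, 0 ≤ t → μ.map (t + ·) ≤ μ) {p : ℝ≥0∞} (hp1 : 1 ≤ p)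
    (hp : p ≠ ∞) {f : ℝ → E} (hf : MemLp f p μ) :
    Tendsto (fun t => eLpNorm (fun x => f (t + x) - f x) p μ) (𝓝[≥] 0) (𝓝 0) := by
  refine ENNReal.tendsto_nhds_zero.2 fun ε hε => ?_
  have hε3 : ε / 3 ≠ 0 := (ENNReal.div_pos hε.ne' ENNReal.ofNat_ne_top).ne'
  obtain ⟨u, hu_supp, hfu, hu_cont, hu⟩ := hf.exists_hasCompactSupport_eLpNorm_sub_le hp hε3
  have hu_shift : ∀ᶠ t in 𝓝 0, eLpNorm (fun x => u (t + x) - u x) p μ ≤ ε / 3 :=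
    (tendsto_eLpNorm_comp_add_left_sub_of_hasCompactSupport hp hu_cont hu_supp).eventually
      (ge_mem_nhds (pos_iff_ne_zero.2 hε3))
  filter_upwards [self_mem_nhdsWithin, nhdsWithin_le_nhds hu_shift] with t (ht : 0 ≤ t) hut
  have hfu_shift : AEStronglyMeasurable (fun x => (f - u) (t + x)) μ :=
    ((hf.sub hu).comp_add_left (hμ t ht)).1
  have hu_diff : AEStronglyMeasurable (fun x => u (t + x) - u x) μ :=
    ((hu_cont.comp (continuous_const_add t)).sub hu_cont).aestronglyMeasurable
  calc eLpNorm (fun x => f (t + x) - f x) p μ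
      = eLpNorm ((fun x => (f - u) (t + x)) + (fun x => u (t + x) - u x) + (u - f)) p μ := by
        congr 1; ext x; simp only [Pi.add_apply, Pi.sub_apply]; abel
    _ ≤ eLpNorm (fun x => (f - u) (t + x)) p μ + eLpNorm (fun x => u (t + x) - u x) p μ
          + eLpNorm (u - f) p μ := by
        refine (eLpNorm_add_le (hfu_shift.add hu_diff) (hu.1.sub hf.1) hp1).trans ?_
        gcongr
        exact eLpNorm_add_le hfu_shift hu_diff hp1
    _ ≤ ε / 3 + ε / 3 + ε / 3 := by
        gcongr
        · exact (eLpNorm_comp_add_left_le (hμ t ht) _ p).trans hfu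
        · rwa [eLpNorm_sub_comm]
    _ = ε := ENNReal.add_thirds ε

end Translation

theorem enorm_sq_add_sq_mul {a b c : ℝ} (hc : 0 ≤ c) :
    ‖(a ^ 2 + b ^ 2) * c‖ₑ = ENNReal.ofReal c * (‖a‖ₑ ^ 2 + ‖b‖ₑ ^ 2) := by
  rw [enorm_mul, Real.enorm_eq_ofReal hc, Real.enorm_eq_ofReal (by positivity),
    ENNReal.ofReal_add (sq_nonneg a) (sq_nonneg b), ← enorm_pow, ← enorm_pow,
    Real.enorm_eq_ofReal (sq_nonneg a), Real.enorm_eq_ofReal (sq_nonneg b), mul_comm]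

noncomputable def weightedHalfLine (w : ℝ → ℝ) : Measure ℝ :=
  (volume.restrict (Ici 0)).withDensity fun x => ENNReal.ofReal (w x)

section weightedHalfLine

variable {w : ℝ → ℝ}

theorem map_add_left_weightedHalfLine_le (hw : MonotoneOn w (Ici 0)) {t : ℝ} (ht : 0 ≤ t) :
    (weightedHalfLine w).map (t + ·) ≤ weightedHalfLine w := by
  refine Measure.le_iff.2 fun s hs => ?_
  have hpre : MeasurableSet ((t + ·) ⁻¹' s) := measurable_const_add t hs
  rw [Measure.map_apply (measurable_const_add t) hs, weightedHalfLine, withDensity_apply _ hpre,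
    withDensity_apply _ hs, Measure.restrict_restrict hpre, Measure.restrict_restrict hs]
  calc ∫⁻ x in (t + ·) ⁻¹' s ∩ Ici 0, ENNReal.ofReal (w x)
      ≤ ∫⁻ x in (t + ·) ⁻¹' s ∩ Ici 0, ENNReal.ofReal (w (t + x)) :=
        setLIntegral_mono' (hpre.inter measurableSet_Ici) fun x hx =>
          ENNReal.ofReal_le_ofReal (hw hx.2 (mem_Ici.2 (add_nonneg ht hx.2))
            (le_add_of_nonneg_left ht))
    _ ≤ ∫⁻ x in (t + ·) ⁻¹' (s ∩ Ici 0), ENNReal.ofReal (w (t + x)) :=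
        lintegral_mono_set fun x hx => ⟨hx.1, add_nonneg ht hx.2⟩
    _ = ∫⁻ y in s ∩ Ici 0, ENNReal.ofReal (w y) :=
        (measurePreserving_add_left volume t).setLIntegral_comp_preimage_emb
          (measurableEmbedding_addLeft t) (fun y => ENNReal.ofReal (w y)) (s ∩ Ici 0)

theorem isLocallyFiniteMeasure_weightedHalfLine (hw : MonotoneOn w (Ici 0)) :
    IsLocallyFiniteMeasure (weightedHalfLine w) := by
  refine ⟨fun x => ⟨Iio (|x| + 1), Iio_mem_nhds (by linarith [le_abs_self x]), ?_⟩⟩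
  rw [weightedHalfLine, withDensity_apply _ measurableSet_Iio,
    Measure.restrict_restrict measurableSet_Iio, Iio_inter_Ici]
  calc ∫⁻ y in Ico 0 (|x| + 1), ENNReal.ofReal (w y)
      ≤ ∫⁻ _ in Ico 0 (|x| + 1), ENNReal.ofReal (w (|x| + 1)) :=
        setLIntegral_mono' measurableSet_Ico fun y hy => ENNReal.ofReal_le_ofReal
          (hw (mem_Ici.2 hy.1) (mem_Ici.2 (by positivity)) hy.2.le)
    _ < ∞ := by
        rw [setLIntegral_const]
        exact ENNReal.mul_lt_top ENNReal.ofReal_lt_top measure_Ico_lt_top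

theorem lintegral_weightedHalfLine (hw : MonotoneOn w (Ici 0)) (F : ℝ → ℝ≥0∞) :
    ∫⁻ x, F x ∂weightedHalfLine w = ∫⁻ x in Ici 0, ENNReal.ofReal (w x) * F x :=
  lintegral_withDensity_eq_lintegral_mul_non_measurable₀ _
    (aemeasurable_restrict_of_monotoneOn measurableSet_Ici hw).ennreal_ofReal
    (Eventually.of_forall fun _ => ENNReal.ofReal_lt_top) F

theorem setLIntegral_enorm_sq_add_sq_mul_eq (hw0 : ∀ x ∈ Ici (0 : ℝ), 0 ≤ w x)
    (hw : MonotoneOn w (Ici 0)) (a b : ℝ → ℝ) :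
    ∫⁻ x in Ici 0, ‖(a x ^ 2 + b x ^ 2) * w x‖ₑ =
      ∫⁻ x, ‖a x‖ₑ ^ 2 + ‖b x‖ₑ ^ 2 ∂weightedHalfLine w := by
  rw [lintegral_weightedHalfLine hw]
  exact setLIntegral_congr_fun measurableSet_Ici fun x hx => enorm_sq_add_sq_mul (hw0 x hx)

end weightedHalfLine

theorem IsWeakDerivOn.continuousWithinAt_zero {f g : ℝ → ℝ} (h : IsWeakDerivOn f g) :
    ContinuousWithinAt f (Ici 0) 0 := by
  have hint : IntegrableOn g (uIcc 0 1) := h.1.integrableOn_compact_subset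
    (by simp [Icc_subset_Ici_self]) isCompact_uIcc
  have hprim : ContinuousWithinAt (fun x => f 0 + ∫ z in 0..x, g z) (Icc 0 1) 0 := by
    refine continuousWithinAt_const.add ?_
    simpa [uIcc_of_le zero_le_one] using
      intervalIntegral.continuousOn_primitive_interval hint 0 left_mem_uIcc
  rw [ContinuousWithinAt, ← nhdsWithin_Icc_eq_nhdsGE zero_lt_one]
  refine hprim.congr (fun x hx => ?_) (by simp)
  rw [← h.2 x 0 le_rfl hx.1, add_sub_cancel]

theorem MemU.memLp_weightedHalfLine {w φ d1 d2 : ℝ → ℝ} (hw0 : ∀ x ∈ Ici (0 : ℝ), 0 ≤ w x)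
    (hw : MonotoneOn w (Ici 0)) (hφ : MemU w φ d1 d2) :
    MemLp d1 2 (weightedHalfLine w) ∧ MemLp d2 2 (weightedHalfLine w) := by
  obtain ⟨⟨hd1, -⟩, ⟨hd2, -⟩, hInt⟩ := hφ
  have hfin : ∫⁻ x, ‖d1 x‖ₑ ^ 2 + ‖d2 x‖ₑ ^ 2 ∂weightedHalfLine w < ∞ := by
    rw [← setLIntegral_enorm_sq_add_sq_mul_eq hw0 hw]
    exact hInt.hasFiniteIntegral
  have hac := withDensity_absolutelyContinuous (volume.restrict (Ici 0))
    fun x => ENNReal.ofReal (w x)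
  refine ⟨⟨hd1.aestronglyMeasurable.mono_ac hac, ?_⟩, ⟨hd2.aestronglyMeasurable.mono_ac hac, ?_⟩⟩
  · have := (lintegral_mono fun x => le_self_add).trans_lt hfin
    rw [← eLpNorm_two_sq_eq_lintegral] at this
    simpa using this
  · have := (lintegral_mono fun x => le_add_self).trans_lt hfin
    rw [← eLpNorm_two_sq_eq_lintegral] at this
    simpa using this

theorem tendsto_setIntegral_sq_add_sq_shift_sub_mul {w a b : ℝ → ℝ}
    (hw0 : ∀ x ∈ Ici (0 : ℝ), 0 ≤ w x) (hw : MonotoneOn w (Ici 0))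
    (ha : MemLp a 2 (weightedHalfLine w)) (hb : MemLp b 2 (weightedHalfLine w)) :
    Tendsto (fun t => ∫ x in Ici 0, ((a (t + x) - a x) ^ 2 + (b (t + x) - b x) ^ 2) * w x)
      (𝓝[≥] 0) (𝓝 0) := by
  have := isLocallyFiniteMeasure_weightedHalfLine hw
  have hshift : ∀ t, 0 ≤ t → (weightedHalfLine w).map (t + ·) ≤ weightedHalfLine w :=
    fun t ht => map_add_left_weightedHalfLine_le hw ht
  have hlim : Tendsto (fun t => eLpNorm (fun x => a (t + x) - a x) 2 (weightedHalfLine w) ^ 2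
      + eLpNorm (fun x => b (t + x) - b x) 2 (weightedHalfLine w) ^ 2) (𝓝[≥] 0) (𝓝 0) := by
    simpa using
      (ENNReal.Tendsto.pow (tendsto_eLpNorm_comp_add_left_sub hshift one_le_two
        ENNReal.ofNat_ne_top ha) (n := 2)).add
      (ENNReal.Tendsto.pow (tendsto_eLpNorm_comp_add_left_sub hshift one_le_two
        ENNReal.ofNat_ne_top hb) (n := 2))
  rw [tendsto_zero_iff_enorm_tendsto_zero]
  refine tendsto_of_tendsto_of_tendsto_of_le_of_le' tendsto_const_nhds hlim
    (Eventually.of_forall fun _ => bot_le) ?_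
  filter_upwards [self_mem_nhdsWithin] with t (ht : 0 ≤ t)
  have ha' : AEStronglyMeasurable (fun x => a (t + x) - a x) (weightedHalfLine w) :=
    ((ha.comp_add_left (hshift t ht)).sub ha).1
  calc _ ≤ ∫⁻ x in Ici 0, ‖((a (t + x) - a x) ^ 2 + (b (t + x) - b x) ^ 2) * w x‖ₑ :=
        enorm_integral_le_lintegral_enorm _
    _ = ∫⁻ x, ‖a (t + x) - a x‖ₑ ^ 2 + ‖b (t + x) - b x‖ₑ ^ 2 ∂weightedHalfLine w :=
        setLIntegral_enorm_sq_add_sq_mul_eq hw0 hw _ _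
    _ = _ := by
        rw [lintegral_add_left' (ha'.enorm.pow_const 2), eLpNorm_two_sq_eq_lintegral,
          eLpNorm_two_sq_eq_lintegral]

theorem stmt_8_general
    (w : ℝ → ℝ)
    (hw1 : ∀ x ∈ Set.Ici (0:ℝ), 1 ≤ w x)
    (hwmono : MonotoneOn w (Set.Ici 0))
    (φ d1 d2 : ℝ → ℝ) (hφ : MemU w φ d1 d2) :
    Tendsto (fun t =>
        UNorm w (fun x => φ (t + x) - φ x) (fun x => d1 (t + x) - d1 x)
          (fun x => d2 (t + x) - d2 x))
      (𝓝[>] (0:ℝ)) (𝓝 0) := by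
  have hw0 : ∀ x ∈ Ici (0 : ℝ), 0 ≤ w x := fun x hx => zero_le_one.trans (hw1 x hx)
  obtain ⟨hd1, hd2⟩ := hφ.memLp_weightedHalfLine hw0 hwmono
  have hφ0 : Tendsto (fun t => φ t - φ 0) (𝓝[≥] 0) (𝓝 0) := by
    simpa using hφ.1.continuousWithinAt_zero.sub_const (φ 0)
  have hd10 : Tendsto (fun t => d1 t - d1 0) (𝓝[≥] 0) (𝓝 0) := by
    simpa using hφ.2.1.continuousWithinAt_zero.sub_const (d1 0)
  have hsq := ((hφ0.pow 2).add (hd10.pow 2)).add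
    (tendsto_setIntegral_sq_add_sq_shift_sub_mul hw0 hwmono hd1 hd2)
  simp only [UNorm, add_zero]
  exact (Real.continuous_sqrt.tendsto' _ 0 (by norm_num)).comp
    (hsq.mono_left (nhdsWithin_mono _ Ioi_subset_Ici_self))

/-- strong continuity of the shift semigroup on `U`:
`‖S(t)φ − φ‖_U → 0` as `t → 0⁺`. -/
theorem stmt_8
    (w : ℝ → ℝ)
    (hw1 : ∀ x ∈ Set.Ici (0:ℝ), 1 ≤ w x)
    (hwmono : MonotoneOn w (Set.Ici 0))
    (hwC1 : ContDiffOn ℝ 1 w (Set.Ici 0))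
    (hw13 : IntegrableOn (fun x => (w x) ^ (-(1/3 : ℝ))) (Set.Ici 0))
    (φ d1 d2 : ℝ → ℝ) (hφ : MemU w φ d1 d2) :
    Tendsto (fun t =>
        UNorm w (fun x => φ (t + x) - φ x) (fun x => d1 (t + x) - d1 x)
          (fun x => d2 (t + x) - d2 x))
      (𝓝[>] (0:ℝ)) (𝓝 0) :=
  stmt_8_general w hw1 hwmono φ d1 d2 hφ
end

section
/- Let U be the weighted Hilbert space as above. There is a constant C such that for every φ ∈ U with lim_{x→∞} φ(x) = 0, the function Sφ(x) := φ(x) ∫₀ˣ φ(y) dy belongs to U and ‖Sφ‖_U ≤ C ‖φ‖_U². -/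
/-!
Write `Iφ(x) = ∫₀ˣ φ`, `A = ∫ w^{-1/3}` and `E = ∫ (φ'² + φ''²) w`. The product rule for
absolutely continuous functions gives `(Sφ)' = φ' Iφ + φ²` and `(Sφ)'' = φ'' Iφ + 3 φ φ'`.
Since `φ(∞) = 0`, `φ(x) = -∫ₓ^∞ φ'`; bounding `2|φ'| ≤ t φ'² w + 1/(t w)` with
`1/w ≤ w(x)^{-2/3} w^{-1/3}` beyond `x` and optimising in `t` gives `|φ(x)| ≤ w(x)^{-1/3} √(A E)`.
Hence `|φ| ≤ √(A E)` and `|Iφ| ≤ A √(A E)`, and the one term of `((Sφ)'² + (Sφ)''²) w` that is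
not a bounded multiple of `(φ'² + φ''²) w`, namely `φ⁴ w`, is at most `(A E)² w^{-1/3}`.
-/

open MeasureTheory Set Filter Topology

theorem MeasureTheory.LocallyIntegrableOn.intervalIntegrable_of_mem_Ici {f : ℝ → ℝ} {a x y : ℝ}
    (hf : LocallyIntegrableOn f (Ici a)) (hx : a ≤ x) (hy : a ≤ y) :
    IntervalIntegrable f volume x y :=
  (hf.integrableOn_compact_subset (fun _ hz => le_trans (le_min hx hy) hz.1)
    isCompact_uIcc).intervalIntegrable

theorem isWeakDerivOn_intervalIntegral {f : ℝ → ℝ} (hf : LocallyIntegrableOn f (Ici 0)) :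
    IsWeakDerivOn (fun x => ∫ y in (0:ℝ)..x, f y) f :=
  ⟨hf, fun _ _ hy hyx => intervalIntegral.integral_interval_sub_left
    (hf.intervalIntegrable_of_mem_Ici le_rfl (hy.trans hyx))
    (hf.intervalIntegrable_of_mem_Ici le_rfl hy)⟩

namespace IsWeakDerivOn

variable {F G f g : ℝ → ℝ}

theorem continuousOn (hF : IsWeakDerivOn F f) : ContinuousOn F (Ici 0) := by
  intro x (hx : 0 ≤ x)
  have hIcc : uIcc 0 (x + 1) = Icc 0 (x + 1) := uIcc_of_le (by linarith)
  have hprim : ContinuousOn (fun z => F 0 + ∫ t in (0:ℝ)..z, f t) (Icc 0 (x + 1)) :=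
    hIcc ▸ continuousOn_const.add (intervalIntegral.continuousOn_primitive_interval
      (hF.1.integrableOn_compact_subset (hIcc ▸ fun _ hz => hz.1) isCompact_uIcc))
  have hEq : EqOn (fun z => F 0 + ∫ t in (0:ℝ)..z, f t) F (Icc 0 (x + 1)) := fun z hz => by
    have := hF.2 z 0 le_rfl hz.1
    simp only
    linarith
  have hnhds : Icc 0 (x + 1) ∈ 𝓝[Ici 0] x := by
    rw [← Ici_inter_Iic]
    exact inter_mem_nhdsWithin _ (Iic_mem_nhds (lt_add_one x))
  exact ((hprim.congr hEq.symm) x ⟨hx, by linarith⟩).mono_of_mem_nhdsWithin hnhds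

theorem exists_absolutelyContinuousOnInterval (hF : IsWeakDerivOn F f) {x y : ℝ}
    (hy : 0 ≤ y) (hyx : y ≤ x) :
    ∃ F' : ℝ → ℝ, AbsolutelyContinuousOnInterval F' y x ∧ EqOn F F' (Icc y x) ∧
      ∀ᵐ z, z ∈ uIcc y x → HasDerivAt F' (f z) z := by
  have hf := hF.1.intervalIntegrable_of_mem_Ici hy (hy.trans hyx)
  refine ⟨fun z => F y + ∫ t in y..z, f t, ?_, fun z hz => ?_, ?_⟩
  · exact (LipschitzWith.const (F y)).lipschitzOnWith.absolutelyContinuousOnInterval.fun_add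
      (hf.absolutelyContinuousOnInterval_intervalIntegral left_mem_uIcc)
  · have := hF.2 z y hy hz.1
    simp only
    linarith
  · filter_upwards [hf.ae_hasDerivAt_integral] with z hz hzI
    exact (hz hzI y left_mem_uIcc).const_add _

theorem mul (hF : IsWeakDerivOn F f) (hG : IsWeakDerivOn G g) :
    IsWeakDerivOn (fun x => F x * G x) (fun x => f x * G x + F x * g x) := by
  refine ⟨(hF.1.mul_continuousOn hG.continuousOn isClosed_Ici.isLocallyClosed).add
    (hG.1.continuousOn_mul hF.continuousOn isClosed_Ici.isLocallyClosed), fun x y hy hyx => ?_⟩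
  obtain ⟨F', hF'ac, hFF', hF'd⟩ := hF.exists_absolutelyContinuousOnInterval hy hyx
  obtain ⟨G', hG'ac, hGG', hG'd⟩ := hG.exists_absolutelyContinuousOnInterval hy hyx
  simp only
  rw [hFF' ⟨hyx, le_rfl⟩, hGG' ⟨hyx, le_rfl⟩, hFF' ⟨le_rfl, hyx⟩, hGG' ⟨le_rfl, hyx⟩,
    ← hF'ac.integral_deriv_mul_eq_sub hG'ac]
  refine intervalIntegral.integral_congr_ae ?_
  filter_upwards [hF'd, hG'd] with z hFz hGz hz
  rw [uIoc_of_le hyx] at hz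
  have hz' : z ∈ uIcc y x := by rw [uIcc_of_le hyx]; exact Ioc_subset_Icc_self hz
  rw [(hFz hz').deriv, (hGz hz').deriv, hFF' (Ioc_subset_Icc_self hz),
    hGG' (Ioc_subset_Icc_self hz)]

theorem add (hF : IsWeakDerivOn F f) (hG : IsWeakDerivOn G g) :
    IsWeakDerivOn (fun x => F x + G x) (fun x => f x + g x) := by
  refine ⟨hF.1.add hG.1, fun x y hy hyx => ?_⟩
  rw [intervalIntegral.integral_add (hF.1.intervalIntegrable_of_mem_Ici hy (hy.trans hyx))
    (hG.1.intervalIntegrable_of_mem_Ici hy (hy.trans hyx)), ← hF.2 x y hy hyx, ← hG.2 x y hy hyx]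
  ring

theorem eq_neg_setIntegral_Ioi (hF : IsWeakDerivOn F f) (hlim : Tendsto F atTop (𝓝 0))
    {x : ℝ} (hx : 0 ≤ x) (hf : IntegrableOn f (Ioi x)) : F x = -∫ z in Ioi x, f z := by
  have hdiff : Tendsto (fun T => F T - F x) atTop (𝓝 (∫ z in Ioi x, f z)) :=
    (intervalIntegral_tendsto_integral_Ioi x hf tendsto_id).congr'
      (by filter_upwards [eventually_ge_atTop x] with T hT using (hF.2 T x hx hT).symm)
  have := tendsto_nhds_unique hdiff (hlim.sub_const (F x))
  linarith

end IsWeakDerivOn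

theorem le_sqrt_mul_of_forall_le_half_add {X A M : ℝ} (hA : 0 ≤ A) (hM : 0 ≤ M)
    (h : ∀ t > 0, X ≤ (t * M + A / t) / 2) : X ≤ √(A * M) := by
  rcases le_or_gt X 0 with hX | hX
  · exact hX.trans (Real.sqrt_nonneg _)
  rcases hM.eq_or_lt with rfl | hM
  · have hXt := h ((A + 1) / X) (by positivity)
    have hfrac : A * X / (A + 1) ≤ X := by
      rw [div_le_iff₀ (by positivity)]
      nlinarith
    rw [div_div_eq_mul_div, mul_zero, zero_add] at hXt
    linarith
  · have hXt := h (X / M) (by positivity)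
    rw [div_div_eq_mul_div, div_mul_cancel₀ _ hM.ne'] at hXt
    have hX2 : X * X ≤ A * M := (le_div_iff₀ hX).1 (by linarith)
    exact Real.le_sqrt_of_sq_le (by nlinarith)

theorem abs_le_half_mul_add_rpow {v a b t : ℝ} (ha : 0 < a) (hab : a ≤ b) (ht : 0 < t) :
    |v| ≤ (t * (v ^ 2 * b) + (a ^ (-(1/3 : ℝ))) ^ 2 * b ^ (-(1/3 : ℝ)) / t) / 2 := by
  have hb : 0 < b := ha.trans_le hab
  have hinv : b⁻¹ ≤ (a ^ (-(1/3 : ℝ))) ^ 2 * b ^ (-(1/3 : ℝ)) := by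
    have hsplit : b⁻¹ = (b ^ (-(1/3 : ℝ))) ^ 2 * b ^ (-(1/3 : ℝ)) := by
      rw [← Real.rpow_natCast, ← Real.rpow_mul hb.le, ← Real.rpow_add hb, ← Real.rpow_neg_one]
      norm_num
    rw [hsplit]
    have hle : b ^ (-(1/3 : ℝ)) ≤ a ^ (-(1/3 : ℝ)) :=
      Real.rpow_le_rpow_of_nonpos ha hab (by norm_num)
    exact mul_le_mul_of_nonneg_right (pow_le_pow_left₀ (by positivity) hle 2) (by positivity)
  have hamgm : 2 * |v| ≤ t * b * |v| ^ 2 + (t * b)⁻¹ := by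
    have htb : 0 < t * b := by positivity
    have := sq_nonneg (t * b * |v| - 1)
    have hcancel : t * b * (t * b)⁻¹ = 1 := mul_inv_cancel₀ htb.ne'
    nlinarith [inv_pos.2 htb]
  have hdiv : (t * b)⁻¹ ≤ (a ^ (-(1/3 : ℝ))) ^ 2 * b ^ (-(1/3 : ℝ)) / t := by
    rw [mul_inv, mul_comm, ← div_eq_mul_inv]
    gcongr
  rw [sq_abs] at hamgm
  linarith [show t * b * v ^ 2 = t * (v ^ 2 * b) by ring]

noncomputable def weightMoment (w : ℝ → ℝ) : ℝ :=
  ∫ x in Ici (0:ℝ), w x ^ (-(1/3 : ℝ))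

noncomputable def weightedEnergy (w d1 d2 : ℝ → ℝ) : ℝ :=
  ∫ x in Ici (0:ℝ), (d1 x ^ 2 + d2 x ^ 2) * w x

theorem weightMoment_nonneg {w : ℝ → ℝ} (hw : ∀ x ∈ Ici (0:ℝ), 0 ≤ w x) : 0 ≤ weightMoment w :=
  setIntegral_nonneg measurableSet_Ici fun x hx => Real.rpow_nonneg (hw x hx) _

theorem weightedEnergy_nonneg {w d1 d2 : ℝ → ℝ} (hw : ∀ x ∈ Ici (0:ℝ), 0 ≤ w x) :
    0 ≤ weightedEnergy w d1 d2 :=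
  setIntegral_nonneg measurableSet_Ici fun x hx => by have := hw x hx; positivity

theorem integrableOn_Ioi_and_setIntegral_abs_le {w h : ℝ → ℝ} {x : ℝ} (hx : 0 ≤ x)
    (hw0 : ∀ z ∈ Ici (0:ℝ), 0 < w z) (hwmono : MonotoneOn w (Ici 0))
    (hw13 : IntegrableOn (fun z => w z ^ (-(1/3 : ℝ))) (Ici 0))
    (hm : AEStronglyMeasurable h (volume.restrict (Ici 0)))
    (hint : IntegrableOn (fun z => h z ^ 2 * w z) (Ici 0)) :
    IntegrableOn h (Ioi x) ∧
      ∫ z in Ioi x, |h z| ≤ w x ^ (-(1/3 : ℝ)) *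
        √(weightMoment w * ∫ z in Ici (0:ℝ), h z ^ 2 * w z) := by
  set a := w x ^ (-(1/3 : ℝ))
  have hsub : Ioi x ⊆ Ici 0 := fun z hz => hx.trans (le_of_lt hz)
  have hdom (t : ℝ) : IntegrableOn
      (fun z => (t * (h z ^ 2 * w z) + a ^ 2 * w z ^ (-(1/3 : ℝ)) / t) / 2) (Ioi x) :=
    (((hint.mono_set hsub).const_mul t).add
      (((hw13.mono_set hsub).const_mul (a ^ 2)).div_const t)).div_const 2
  have hbound {t : ℝ} (ht : 0 < t) (z : ℝ) (hz : z ∈ Ioi x) :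
      |h z| ≤ (t * (h z ^ 2 * w z) + a ^ 2 * w z ^ (-(1/3 : ℝ)) / t) / 2 :=
    abs_le_half_mul_add_rpow (hw0 x hx) (hwmono hx (hsub hz) (le_of_lt hz)) ht
  have hhint : IntegrableOn h (Ioi x) :=
    (hdom 1).mono' (hm.mono_measure (Measure.restrict_mono hsub le_rfl))
      ((ae_restrict_iff' measurableSet_Ioi).2 (Eventually.of_forall (hbound one_pos)))
  refine ⟨hhint, ?_⟩
  have hamgm : ∀ t > 0, ∫ z in Ioi x, |h z| ≤ (t * (∫ z in Ici (0:ℝ), h z ^ 2 * w z)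
      + a ^ 2 * weightMoment w / t) / 2 := fun t ht =>
    calc ∫ z in Ioi x, |h z|
        ≤ ∫ z in Ioi x, (t * (h z ^ 2 * w z) + a ^ 2 * w z ^ (-(1/3 : ℝ)) / t) / 2 :=
          setIntegral_mono_on hhint.abs (hdom t) measurableSet_Ioi (hbound ht)
      _ = (t * (∫ z in Ioi x, h z ^ 2 * w z)
            + a ^ 2 * (∫ z in Ioi x, w z ^ (-(1/3 : ℝ))) / t) / 2 := by
          rw [integral_div, integral_add ((hint.mono_set hsub).const_mul t)
            (((hw13.mono_set hsub).const_mul (a ^ 2)).div_const t), integral_const_mul,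
            integral_div, integral_const_mul]
      _ ≤ _ := by
          unfold weightMoment
          gcongr <;> filter_upwards [ae_restrict_mem measurableSet_Ici] with z hz <;>
            have := hw0 z hz <;> positivity
  have ha : 0 ≤ a := by have := hw0 x hx; positivity
  calc ∫ z in Ioi x, |h z| ≤ √(a ^ 2 * weightMoment w * ∫ z in Ici (0:ℝ), h z ^ 2 * w z) :=
        le_sqrt_mul_of_forall_le_half_add
          (mul_nonneg (sq_nonneg a) (weightMoment_nonneg fun z hz => (hw0 z hz).le))
          (setIntegral_nonneg measurableSet_Ici fun z hz => by have := hw0 z hz; positivity)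
          hamgm
    _ = _ := by rw [mul_assoc, Real.sqrt_mul (sq_nonneg a), Real.sqrt_sq ha]

theorem integrableOn_and_setIntegral_le_of_le {α : Type*} [MeasurableSpace α] {μ : Measure α}
    {f g : α → ℝ} {s : Set α} (hs : MeasurableSet s) (hf : AEStronglyMeasurable f (μ.restrict s))
    (hg : IntegrableOn g s μ) (hf0 : ∀ x ∈ s, 0 ≤ f x) (hfg : ∀ x ∈ s, f x ≤ g x) :
    IntegrableOn f s μ ∧ ∫ x in s, f x ∂μ ≤ ∫ x in s, g x ∂μ := by
  have hfi : IntegrableOn f s μ := hg.mono' hf <| (ae_restrict_iff' hs).2 <|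
    Eventually.of_forall fun x hx => by rw [Real.norm_of_nonneg (hf0 x hx)]; exact hfg x hx
  exact ⟨hfi, setIntegral_mono_on hfi hg hs hfg⟩

theorem rpow_neg_one_third_pow_four_mul {w : ℝ} (hw : 0 < w) :
    (w ^ (-(1/3 : ℝ))) ^ 4 * w = w ^ (-(1/3 : ℝ)) := by
  rw [← Real.rpow_natCast, ← Real.rpow_mul hw.le, ← Real.rpow_add_one hw.ne']
  norm_num

theorem sq_add_sq_mul_le_of_abs_le {d1 d2 I φ w B P Q : ℝ} (hI : |I| ≤ B) (hφ : |φ| ≤ P)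
    (hw : 0 ≤ w) (hφw : φ ^ 4 * w ≤ Q) :
    ((d1 * I + φ ^ 2) ^ 2 + (d2 * I + 3 * φ * d1) ^ 2) * w ≤
      (2 * B ^ 2 + 18 * P ^ 2) * ((d1 ^ 2 + d2 ^ 2) * w) + 2 * Q := by
  have hI2 : I ^ 2 ≤ B ^ 2 := sq_le_sq' (abs_le.1 hI).1 (abs_le.1 hI).2
  have hφ2 : φ ^ 2 ≤ P ^ 2 := sq_le_sq' (abs_le.1 hφ).1 (abs_le.1 hφ).2
  have hsq : (d1 * I + φ ^ 2) ^ 2 + (d2 * I + 3 * φ * d1) ^ 2 ≤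
      (2 * B ^ 2 + 18 * P ^ 2) * (d1 ^ 2 + d2 ^ 2) + 2 * φ ^ 4 := by
    nlinarith [sq_nonneg (d1 * I - φ ^ 2), sq_nonneg (d2 * I - 3 * φ * d1),
      mul_le_mul_of_nonneg_left hI2 (sq_nonneg d1), mul_le_mul_of_nonneg_left hI2 (sq_nonneg d2),
      mul_le_mul_of_nonneg_left hφ2 (sq_nonneg d1), sq_nonneg P, sq_nonneg d2]
  nlinarith [mul_le_mul_of_nonneg_right hsq hw]

namespace MemU

variable {w φ d1 d2 : ℝ → ℝ}

theorem integrableOn_sq_mul_and_setIntegral_le (hw0 : ∀ x ∈ Ici (0:ℝ), 0 ≤ w x)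
    (hwm : AEStronglyMeasurable w (volume.restrict (Ici 0))) (hmem : MemU w φ d1 d2) :
    IntegrableOn (fun x => d1 x ^ 2 * w x) (Ici 0) ∧
      ∫ x in Ici (0:ℝ), d1 x ^ 2 * w x ≤ weightedEnergy w d1 d2 :=
  integrableOn_and_setIntegral_le_of_le measurableSet_Ici
    ((hmem.1.1.aestronglyMeasurable.pow 2).mul hwm) hmem.2.2
    (fun x hx => by have := hw0 x hx; positivity)
    (fun x hx => by have := hw0 x hx; nlinarith [sq_nonneg (d2 x)])

theorem abs_le_rpow_mul_sqrt (hw1 : ∀ x ∈ Ici (0:ℝ), 1 ≤ w x) (hwmono : MonotoneOn w (Ici 0))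
    (hw13 : IntegrableOn (fun x => w x ^ (-(1/3 : ℝ))) (Ici 0)) (hmem : MemU w φ d1 d2)
    (hlim : Tendsto φ atTop (𝓝 0)) {x : ℝ} (hx : 0 ≤ x) :
    |φ x| ≤ w x ^ (-(1/3 : ℝ)) * √(weightMoment w * weightedEnergy w d1 d2) := by
  have hw0 (z : ℝ) (hz : z ∈ Ici (0:ℝ)) : 0 < w z := one_pos.trans_le (hw1 z hz)
  obtain ⟨hsq, hsq_le⟩ := hmem.integrableOn_sq_mul_and_setIntegral_le (fun z hz => (hw0 z hz).le)
    (aemeasurable_restrict_of_monotoneOn measurableSet_Ici hwmono).aestronglyMeasurable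
  obtain ⟨hd1, htail⟩ := integrableOn_Ioi_and_setIntegral_abs_le hx hw0 hwmono hw13
    hmem.1.1.aestronglyMeasurable hsq
  calc |φ x| = |∫ z in Ioi x, d1 z| := by rw [hmem.1.eq_neg_setIntegral_Ioi hlim hx hd1, abs_neg]
    _ ≤ ∫ z in Ioi x, |d1 z| := abs_integral_le_integral_abs
    _ ≤ _ := htail
    _ ≤ _ := mul_le_mul_of_nonneg_left (Real.sqrt_le_sqrt (mul_le_mul_of_nonneg_left hsq_le
        (weightMoment_nonneg fun z hz => (hw0 z hz).le))) (Real.rpow_nonneg (hw0 x hx).le _)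

theorem abs_le_sqrt (hw1 : ∀ x ∈ Ici (0:ℝ), 1 ≤ w x) (hwmono : MonotoneOn w (Ici 0))
    (hw13 : IntegrableOn (fun x => w x ^ (-(1/3 : ℝ))) (Ici 0)) (hmem : MemU w φ d1 d2)
    (hlim : Tendsto φ atTop (𝓝 0)) {x : ℝ} (hx : 0 ≤ x) :
    |φ x| ≤ √(weightMoment w * weightedEnergy w d1 d2) :=
  (hmem.abs_le_rpow_mul_sqrt hw1 hwmono hw13 hlim hx).trans <|
    mul_le_of_le_one_left (Real.sqrt_nonneg _)
      (Real.rpow_le_one_of_one_le_of_nonpos (hw1 x hx) (by norm_num))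

theorem pow_four_mul_le (hw1 : ∀ x ∈ Ici (0:ℝ), 1 ≤ w x) (hwmono : MonotoneOn w (Ici 0))
    (hw13 : IntegrableOn (fun x => w x ^ (-(1/3 : ℝ))) (Ici 0)) (hmem : MemU w φ d1 d2)
    (hlim : Tendsto φ atTop (𝓝 0)) {x : ℝ} (hx : 0 ≤ x) :
    φ x ^ 4 * w x ≤
      √(weightMoment w * weightedEnergy w d1 d2) ^ 4 * w x ^ (-(1/3 : ℝ)) := by
  have hw : 0 < w x := one_pos.trans_le (hw1 x hx)
  rw [← rpow_neg_one_third_pow_four_mul hw, ← Even.pow_abs (by decide)]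
  calc |φ x| ^ 4 * w x
      ≤ (w x ^ (-(1/3 : ℝ)) * √(weightMoment w * weightedEnergy w d1 d2)) ^ 4 * w x := by
        gcongr
        exact hmem.abs_le_rpow_mul_sqrt hw1 hwmono hw13 hlim hx
    _ = _ := by ring

theorem abs_intervalIntegral_le (hw1 : ∀ x ∈ Ici (0:ℝ), 1 ≤ w x)
    (hwmono : MonotoneOn w (Ici 0)) (hw13 : IntegrableOn (fun x => w x ^ (-(1/3 : ℝ))) (Ici 0))
    (hmem : MemU w φ d1 d2) (hlim : Tendsto φ atTop (𝓝 0)) {x : ℝ} (hx : 0 ≤ x) :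
    |∫ y in (0:ℝ)..x, φ y| ≤
      weightMoment w * √(weightMoment w * weightedEnergy w d1 d2) := by
  set P := √(weightMoment w * weightedEnergy w d1 d2)
  have hg : IntegrableOn (fun y => w y ^ (-(1/3 : ℝ)) * P) (Ici 0) := hw13.mul_const P
  calc |∫ y in (0:ℝ)..x, φ y| = ‖∫ y in (0:ℝ)..x, φ y‖ := (Real.norm_eq_abs _).symm
    _ ≤ ∫ y in (0:ℝ)..x, w y ^ (-(1/3 : ℝ)) * P :=
        intervalIntegral.norm_integral_le_of_norm_le hx (Eventually.of_forall fun y hy =>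
          (Real.norm_eq_abs _).trans_le (hmem.abs_le_rpow_mul_sqrt hw1 hwmono hw13 hlim hy.1.le))
          (hg.locallyIntegrableOn.intervalIntegrable_of_mem_Ici le_rfl hx)
    _ ≤ ∫ y in Ici (0:ℝ), w y ^ (-(1/3 : ℝ)) * P := by
        rw [intervalIntegral.integral_of_le hx]
        refine setIntegral_mono_set hg ?_ (Eventually.of_forall fun y hy => hy.1.le)
        filter_upwards [ae_restrict_mem measurableSet_Ici] with y hy
        have := hw1 y hy
        positivity
    _ = weightMoment w * P := integral_mul_const _ _

theorem isWeakDerivOn_mul_intervalIntegral (hmem : MemU w φ d1 d2) :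
    IsWeakDerivOn (fun x => φ x * ∫ y in (0:ℝ)..x, φ y)
        (fun x => d1 x * (∫ y in (0:ℝ)..x, φ y) + φ x ^ 2) ∧
      IsWeakDerivOn (fun x => d1 x * (∫ y in (0:ℝ)..x, φ y) + φ x ^ 2)
        (fun x => d2 x * (∫ y in (0:ℝ)..x, φ y) + 3 * φ x * d1 x) := by
  have hI := isWeakDerivOn_intervalIntegral
    (hmem.1.continuousOn.locallyIntegrableOn measurableSet_Ici)
  constructor
  · convert hmem.1.mul hI using 1
    funext x; ring
  · convert (hmem.2.1.mul hI).add (hmem.1.mul hmem.1) using 1 <;> funext x <;> ring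

theorem mul_intervalIntegral (hw1 : ∀ x ∈ Ici (0:ℝ), 1 ≤ w x) (hwmono : MonotoneOn w (Ici 0))
    (hw13 : IntegrableOn (fun x => w x ^ (-(1/3 : ℝ))) (Ici 0)) (hmem : MemU w φ d1 d2)
    (hlim : Tendsto φ atTop (𝓝 0)) :
    MemU w (fun x => φ x * ∫ y in (0:ℝ)..x, φ y)
        (fun x => d1 x * (∫ y in (0:ℝ)..x, φ y) + φ x ^ 2)
        (fun x => d2 x * (∫ y in (0:ℝ)..x, φ y) + 3 * φ x * d1 x) ∧
      weightedEnergy w (fun x => d1 x * (∫ y in (0:ℝ)..x, φ y) + φ x ^ 2)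
          (fun x => d2 x * (∫ y in (0:ℝ)..x, φ y) + 3 * φ x * d1 x) ≤
        (4 * weightMoment w ^ 3 + 18 * weightMoment w) * weightedEnergy w d1 d2 ^ 2 := by
  set A := weightMoment w
  set E := weightedEnergy w d1 d2
  set P := √(A * E)
  have hw0 (x : ℝ) (hx : x ∈ Ici (0:ℝ)) : 0 ≤ w x := zero_le_one.trans (hw1 x hx)
  have hP2 : P ^ 2 = A * E :=
    Real.sq_sqrt (mul_nonneg (weightMoment_nonneg hw0) (weightedEnergy_nonneg hw0))
  obtain ⟨hD1, hD2⟩ := hmem.isWeakDerivOn_mul_intervalIntegral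
  have hdom : IntegrableOn (fun x => (2 * (A * P) ^ 2 + 18 * P ^ 2) *
      ((d1 x ^ 2 + d2 x ^ 2) * w x) + 2 * (P ^ 4 * w x ^ (-(1/3 : ℝ)))) (Ici 0) :=
    (hmem.2.2.const_mul _).add ((hw13.const_mul _).const_mul 2)
  obtain ⟨hint, hle⟩ := integrableOn_and_setIntegral_le_of_le measurableSet_Ici
    (((hD1.1.aestronglyMeasurable.fun_pow 2).fun_add
      (hD2.1.aestronglyMeasurable.fun_pow 2)).fun_mul
      (aemeasurable_restrict_of_monotoneOn measurableSet_Ici hwmono).aestronglyMeasurable)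
    hdom (fun x hx => mul_nonneg (by positivity) (hw0 x hx))
    (fun x hx => sq_add_sq_mul_le_of_abs_le
      (hmem.abs_intervalIntegral_le hw1 hwmono hw13 hlim hx)
      (hmem.abs_le_sqrt hw1 hwmono hw13 hlim hx) (hw0 x hx)
      (hmem.pow_four_mul_le hw1 hwmono hw13 hlim hx))
  refine ⟨⟨hD1, hD2, hint⟩, hle.trans_eq ?_⟩
  rw [integral_add (hmem.2.2.const_mul _) ((hw13.const_mul _).const_mul 2), integral_const_mul,
    integral_const_mul, integral_const_mul]
  change (2 * (A * P) ^ 2 + 18 * P ^ 2) * E + 2 * (P ^ 4 * A) = _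
  linear_combination (2 * A ^ 2 * E + 18 * E + 2 * A * (P ^ 2 + A * E)) * hP2

end MemU

theorem stmt_10_general
    (w : ℝ → ℝ)
    (hw1 : ∀ x ∈ Set.Ici (0:ℝ), 1 ≤ w x)
    (hwmono : MonotoneOn w (Set.Ici 0))
    (hw13 : IntegrableOn (fun x => (w x) ^ (-(1/3 : ℝ))) (Set.Ici 0)) :
    ∃ C > 0, ∀ φ d1 d2 : ℝ → ℝ, MemU w φ d1 d2 →
      Tendsto φ atTop (𝓝 0) →
      MemU w (fun x => φ x * ∫ y in (0:ℝ)..x, φ y)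
        (fun x => d1 x * (∫ y in (0:ℝ)..x, φ y) + (φ x) ^ 2)
        (fun x => d2 x * (∫ y in (0:ℝ)..x, φ y) + 3 * φ x * d1 x) ∧
      UNorm w (fun x => φ x * ∫ y in (0:ℝ)..x, φ y)
          (fun x => d1 x * (∫ y in (0:ℝ)..x, φ y) + (φ x) ^ 2)
          (fun x => d2 x * (∫ y in (0:ℝ)..x, φ y) + 3 * φ x * d1 x) ≤
        C * (UNorm w φ d1 d2) ^ 2 := by
  have hw0 (x : ℝ) (hx : x ∈ Ici (0:ℝ)) : 0 ≤ w x := zero_le_one.trans (hw1 x hx)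
  set A := weightMoment w
  have hc : 0 ≤ 4 * A ^ 3 + 18 * A := by have := weightMoment_nonneg hw0; positivity
  refine ⟨1 + (4 * A ^ 3 + 18 * A), by positivity, fun φ d1 d2 hmem hlim => ?_⟩
  obtain ⟨hS, hSE⟩ := hmem.mul_intervalIntegral hw1 hwmono hw13 hlim
  refine ⟨hS, ?_⟩
  set E := weightedEnergy w d1 d2
  set T := φ 0 ^ 2 + d1 0 ^ 2 + E
  have hE : 0 ≤ E := weightedEnergy_nonneg hw0
  have hT : UNorm w φ d1 d2 ^ 2 = T := Real.sq_sqrt (by positivity)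
  have hφ0 : (φ 0 ^ 2) ^ 2 ≤ T ^ 2 := by gcongr; nlinarith [sq_nonneg (d1 0)]
  have hET : E ^ 2 ≤ T ^ 2 := by gcongr; nlinarith [sq_nonneg (d1 0), sq_nonneg (φ 0)]
  rw [hT, UNorm, intervalIntegral.integral_same, Real.sqrt_le_left (by positivity)]
  simp only [mul_zero, zero_add, ne_eq, OfNat.ofNat_ne_zero, not_false_eq_true, zero_pow]
  change (φ 0 ^ 2) ^ 2 + weightedEnergy w _ _ ≤ _
  -- `φ(0)⁴ + c E² ≤ (1 + c) T² ≤ ((1 + c) T)²`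
  nlinarith [mul_le_mul_of_nonneg_left hET hc, sq_nonneg T]

/-- the quadratic HJM drift building block
`Sφ(x) = φ(x)∫₀ˣ φ(y) dy` maps `U ∩ {φ(∞) = 0}` into `U` with
`‖Sφ‖_U ≤ C‖φ‖_U²`. -/
theorem stmt_10
    (w : ℝ → ℝ)
    (hw1 : ∀ x ∈ Set.Ici (0:ℝ), 1 ≤ w x)
    (hwmono : MonotoneOn w (Set.Ici 0))
    (hwC1 : ContDiffOn ℝ 1 w (Set.Ici 0))
    (hw13 : IntegrableOn (fun x => (w x) ^ (-(1/3 : ℝ))) (Set.Ici 0)) :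
    ∃ C > 0, ∀ φ d1 d2 : ℝ → ℝ, MemU w φ d1 d2 →
      Tendsto φ atTop (𝓝 0) →
      MemU w (fun x => φ x * ∫ y in (0:ℝ)..x, φ y)
        (fun x => d1 x * (∫ y in (0:ℝ)..x, φ y) + (φ x) ^ 2)
        (fun x => d2 x * (∫ y in (0:ℝ)..x, φ y) + 3 * φ x * d1 x) ∧
      UNorm w (fun x => φ x * ∫ y in (0:ℝ)..x, φ y)
          (fun x => d1 x * (∫ y in (0:ℝ)..x, φ y) + (φ x) ^ 2)
          (fun x => d2 x * (∫ y in (0:ℝ)..x, φ y) + 3 * φ x * d1 x) ≤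
        C * (UNorm w φ d1 d2) ^ 2 :=
  stmt_10_general w hw1 hwmono hw13
end
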